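/- With P_j, Q_j, R_j as in the Tarasov recurrence (P₀=Q₀=R₀=1, P_{j+1} = s·R_j + A_j·P_j, Q_{j+1} = P_{j+1} + B_j·Q_j, R_{j+1} = Q_{j+1} + C_j·R_j, with A_j, B_j, C_j > 0), denote the roots of P_j, Q_j, R_j in decreasing order by p_{j1} > ... > p_{jj}, q_{j1} > ... > q_{jj}, r_{j1} > ... > r_{jj}. Then for all j ≥ 1: p_{jk} > q_{jk} > r_{jk} for all k = 1,...,j, and r_{jk} > p_{j,k+1} for all k = 1,...,j−1. -/

import Mathlib

open Polynomial

/-!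
Induct on `j`, carrying the factorizations `P j = ∏ (X - p_{jk})` etc. and the chain
`0 > p_{j1} > q_{j1} > r_{j1} > p_{j2} > ⋯ > r_{jj}`. Each of the three steps of the recurrence
has the shape `F = G + c H` with `c > 0`, where `G` (monic, roots `g_1 > ⋯ > g_{n+1}`) and `H`
(monic, roots `h_1 > ⋯ > h_n`) interlace: `g_1 > h_1 > g_2 > ⋯ > h_n > g_{n+1}`. For the first
step `G = X R_j`, whose roots are `0 > r_{j1} > ⋯ > r_{jj}`. Since `F = G` at the roots of `H`
and `F = c H` at the roots of `G`, `F` changes sign on each interval `(h_k, g_k)` (with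
`h_{n+1} = -∞`), so it has a root in each of them; as `F` has degree `n + 1` these are all of its
roots, hence `h_k < f_k < g_k`. Feeding these bounds into the next step propagates the chain.
-/

theorem StrictAntiOn.eqOn_of_image_subset {α β : Type*} [LinearOrder α] [LinearOrder β]
    {s : Set α} (hs : s.Finite) {f g : α → β} (hf : StrictAntiOn f s) (hg : StrictAntiOn g s)
    (hfg : f '' s ⊆ g '' s) : s.EqOn f g := by
  have : ∀ x : s, ∃ y : s, g y = f x := fun x => by
    obtain ⟨y, hy, hyx⟩ := hfg ⟨x, x.2, rfl⟩
    exact ⟨⟨y, hy⟩, hyx⟩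
  choose σ hσ using this
  have hσ_mono : StrictMono σ := fun x y hxy => by
    have := hf x.2 y.2 hxy
    rwa [← hσ x, ← hσ y, hg.lt_iff_gt (σ y).2 (σ x).2] at this
  have := hs.to_subtype
  intro x hx
  rw [← hσ ⟨x, hx⟩, hσ_mono.apply_eq]

theorem Finset.prod_Icc_succ_bot {M : Type*} [CommMonoid M] {a b : ℕ} (hab : a ≤ b + 1)
    (φ : ℕ → M) :
    ∏ k ∈ Finset.Icc a (b + 1), φ k = φ a * ∏ k ∈ Finset.Icc a b, φ (k + 1) := by
  rw [Finset.Icc_eq_cons_Ioc hab, Finset.prod_cons, ← Finset.Icc_add_one_left_eq_Ioc,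
    ← Finset.map_add_right_Icc, Finset.prod_map]
  rfl

theorem neg_one_pow_mul_prod_sub_pos {ρ : ℕ → ℝ} {n m : ℕ} {x : ℝ}
    (hρ : StrictAntiOn ρ (Set.Icc 1 n)) (hm : m ≤ n)
    (hlt : 1 ≤ m → x < ρ m) (hgt : m < n → ρ (m + 1) < x) :
    0 < (-1) ^ m * ∏ k ∈ Finset.Icc 1 n, (x - ρ k) := by
  have hflip :
      (-1) ^ m * ∏ k ∈ Finset.Ioc 0 m, (x - ρ k) = ∏ k ∈ Finset.Ioc 0 m, (ρ k - x) := by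
    rw [show (-1 : ℝ) ^ m = ∏ _k ∈ Finset.Ioc 0 m, (-1) by simp, ← Finset.prod_mul_distrib]
    exact Finset.prod_congr rfl fun _ _ => by ring
  rw [show Finset.Icc 1 n = Finset.Ioc 0 n from Finset.Icc_add_one_left_eq_Ioc 0 n,
    ← Finset.prod_Ioc_consecutive _ (Nat.zero_le m) hm, ← mul_assoc, hflip]
  refine mul_pos (Finset.prod_pos fun k hk => ?_) (Finset.prod_pos fun k hk => ?_) <;>
    rw [Finset.mem_Ioc] at hk
  · have := hρ.antitoneOn ⟨hk.1, hk.2.trans hm⟩ ⟨hk.1.trans_le hk.2, hm⟩ hk.2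
    linarith [hlt (hk.1.trans_le hk.2)]
  · have := hρ.antitoneOn ⟨Nat.le_add_left 1 m, hk.1.trans_le hk.2⟩ ⟨by omega, hk.2⟩ hk.1
    linarith [hgt (hk.1.trans_le hk.2)]

theorem mul_neg_of_neg_one_pow_mul_pos {a b : ℝ} {i : ℕ} (ha : 0 < (-1) ^ (i + 1) * a)
    (hb : 0 < (-1) ^ i * b) : a * b < 0 := by
  have hsq : ((-1 : ℝ) ^ i) ^ 2 = 1 := by rw [← pow_mul, mul_comm, pow_mul, neg_one_sq, one_pow]
  have : (-1) ^ (i + 1) * a * ((-1) ^ i * b) = -(a * b) := by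
    linear_combination (-(a * b)) * hsq
  linarith [mul_pos ha hb]

namespace Polynomial

theorem eval_prod_X_sub_C {R ι : Type*} [CommRing R] (s : Finset ι) (ρ : ι → R) (x : R) :
    (∏ i ∈ s, (X - C (ρ i))).eval x = ∏ i ∈ s, (x - ρ i) := by
  simp only [eval_prod, eval_sub, eval_X, eval_C]

theorem Monic.eq_prod_X_sub_C {R ι : Type*} [CommRing R] [IsDomain R]
    {f : R[X]} (hf : f.Monic) {s : Finset ι} {ρ : ι → R} (hdeg : f.natDegree = s.card)
    (hρ : Set.InjOn ρ s) (hroot : ∀ i ∈ s, f.IsRoot (ρ i)) :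
    f = ∏ i ∈ s, (X - C (ρ i)) := by
  have hle : s.val.map ρ ≤ f.roots := by
    rw [Multiset.le_iff_subset (s.nodup.map_on hρ)]
    intro x hx
    obtain ⟨i, hi, rfl⟩ := Multiset.mem_map.1 hx
    exact (mem_roots hf.ne_zero).2 (hroot i hi)
  have hdvd := (Multiset.prod_X_sub_C_dvd_iff_le_roots hf.ne_zero _).2 hle
  rw [Multiset.map_map] at hdvd
  have := eq_leadingCoeff_mul_of_monic_of_dvd_of_natDegree_le (monic_prod_X_sub_C ρ s) hdvd
    (by rw [hdeg, natDegree_finsetProd_X_sub_C_eq_card])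
  rwa [hf.leadingCoeff, C_1, one_mul] at this

theorem prod_X_sub_C_add_eq_prod_X_sub_C {R ι : Type*} [CommRing R] [IsDomain R]
    {s : Finset ι} {g f : ι → R} {K : R[X]} (hK : K.natDegree < s.card) (hf : Set.InjOn f s)
    (hroot : ∀ i ∈ s, (∏ i ∈ s, (X - C (g i)) + K).IsRoot (f i)) :
    ∏ i ∈ s, (X - C (g i)) + K = ∏ i ∈ s, (X - C (f i)) := by
  have hdeg : K.degree < (∏ i ∈ s, (X - C (g i))).degree :=
    degree_lt_degree (by rwa [natDegree_finsetProd_X_sub_C_eq_card])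
  refine ((monic_prod_X_sub_C g s).add_of_left hdeg).eq_prod_X_sub_C ?_ hf hroot
  rw [natDegree_add_eq_left_of_degree_lt hdeg, natDegree_finsetProd_X_sub_C_eq_card]

theorem exists_isRoot_mem_Ioo_of_eval_mul_neg {f : ℝ[X]} {x y : ℝ} (hxy : x < y)
    (hf : f.eval x * f.eval y < 0) : ∃ z ∈ Set.Ioo x y, f.IsRoot z := by
  have hcont := f.continuous.continuousOn (s := Set.Icc x y)
  rcases mul_neg_iff.1 hf with ⟨hx, hy⟩ | ⟨hx, hy⟩
  · exact intermediate_value_Ioo' hxy.le hcont ⟨hy, hx⟩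
  · exact intermediate_value_Ioo hxy.le hcont ⟨hx, hy⟩

/-- The roots found by the intermediate value theorem are distinct and as many as the degree,
so they are all the roots, and they come in the same order as `ρ`. -/
theorem mem_Ioo_of_eval_mul_neg {f : ℝ[X]} {ρ L U : ℕ → ℝ} {n : ℕ}
    (hf : f = ∏ i ∈ Finset.Icc 1 n, (X - C (ρ i))) (hρ : StrictAntiOn ρ (Set.Icc 1 n))
    (hLU : ∀ k ∈ Set.Icc 1 n, L k < U k) (hUL : ∀ k ∈ Set.Ico 1 n, U (k + 1) ≤ L k)
    (hsign : ∀ k ∈ Set.Icc 1 n, f.eval (L k) * f.eval (U k) < 0) :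
    ∀ k ∈ Set.Icc 1 n, ρ k ∈ Set.Ioo (L k) (U k) := by
  choose! z hz hz_root using fun k hk =>
    exists_isRoot_mem_Ioo_of_eval_mul_neg (hLU k hk) (hsign k hk)
  have hz_anti : StrictAntiOn z (Set.Icc 1 n) :=
    strictAntiOn_of_succ_lt Set.ordConnected_Icc fun k _ hk hk1 => by
      rw [Order.succ_eq_add_one] at hk1 ⊢
      linarith [(hz _ hk1).2, (hz k hk).1, hUL k ⟨hk.1, hk1.2⟩]
  have himg : z '' Set.Icc 1 n ⊆ ρ '' Set.Icc 1 n := by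
    rintro _ ⟨k, hk, rfl⟩
    have := hz_root k hk
    rw [hf, IsRoot, eval_prod_X_sub_C, Finset.prod_eq_zero_iff] at this
    obtain ⟨i, hi, hzi⟩ := this
    exact ⟨i, Finset.mem_Icc.1 hi, (sub_eq_zero.1 hzi).symm⟩
  intro k hk
  rw [← hz_anti.eqOn_of_image_subset (Set.finite_Icc 1 n) hρ himg hk]
  exact hz k hk

end Polynomial

def Interlaces (g h : ℕ → ℝ) (n : ℕ) : Prop :=
  ∀ k ∈ Set.Icc 1 n, g (k + 1) < h k ∧ h k < g k

namespace Interlaces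

variable {g h : ℕ → ℝ} {n : ℕ}

theorem strictAntiOn_left (hgh : Interlaces g h n) : StrictAntiOn g (Set.Icc 1 (n + 1)) :=
  strictAntiOn_of_succ_lt Set.ordConnected_Icc fun k _ hk hk1 => by
    rw [Order.succ_eq_add_one] at hk1 ⊢
    have := hgh k ⟨hk.1, Nat.le_of_succ_le_succ hk1.2⟩
    exact this.1.trans this.2

theorem strictAntiOn_right (hgh : Interlaces g h n) : StrictAntiOn h (Set.Icc 1 n) :=
  strictAntiOn_of_succ_lt Set.ordConnected_Icc fun k _ hk hk1 => by
    rw [Order.succ_eq_add_one] at hk1 ⊢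
    exact (hgh (k + 1) hk1).2.trans (hgh k hk).1

theorem neg_one_pow_mul_eval_prod_right_pos (hgh : Interlaces g h n) {i : ℕ} (hi : i ≤ n) :
    0 < (-1) ^ i * (∏ k ∈ Finset.Icc 1 n, (X - C (h k))).eval (g (i + 1)) := by
  rw [eval_prod_X_sub_C]
  exact neg_one_pow_mul_prod_sub_pos hgh.strictAntiOn_right hi
    (fun hi1 => (hgh i ⟨hi1, hi⟩).1) (fun hin => (hgh (i + 1) ⟨Nat.le_add_left 1 i, hin⟩).2)

theorem neg_one_pow_mul_eval_prod_left_pos (hgh : Interlaces g h n) {i : ℕ} (hi : i + 1 ≤ n) :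
    0 < (-1) ^ (i + 1) * (∏ k ∈ Finset.Icc 1 (n + 1), (X - C (g k))).eval (h (i + 1)) := by
  have hgh_i := hgh (i + 1) ⟨Nat.le_add_left 1 i, hi⟩
  rw [eval_prod_X_sub_C]
  exact neg_one_pow_mul_prod_sub_pos hgh.strictAntiOn_left (hi.trans n.le_succ)
    (fun _ => hgh_i.2) (fun _ => hgh_i.1)

theorem add_C_mul (hgh : Interlaces g h n) {c : ℝ} (hc : 0 < c) {F : ℝ[X]}
    (hF : F = ∏ k ∈ Finset.Icc 1 (n + 1), (X - C (g k)) +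
      C c * ∏ k ∈ Finset.Icc 1 n, (X - C (h k)))
    {f : ℕ → ℝ} (hf_root : ∀ k ∈ Set.Icc 1 (n + 1), F.IsRoot (f k))
    (hf : StrictAntiOn f (Set.Icc 1 (n + 1))) :
    F = ∏ k ∈ Finset.Icc 1 (n + 1), (X - C (f k)) ∧
      ∀ k ∈ Set.Icc 1 (n + 1), f k < g k ∧ (k ≤ n → h k < f k) := by
  set G := ∏ k ∈ Finset.Icc 1 (n + 1), (X - C (g k))
  set H := ∏ k ∈ Finset.Icc 1 n, (X - C (h k))
  have hF_prod : F = ∏ k ∈ Finset.Icc 1 (n + 1), (X - C (f k)) := by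
    subst hF
    refine prod_X_sub_C_add_eq_prod_X_sub_C ?_ (by simpa using hf.injOn)
      fun k hk => hf_root k (Finset.mem_Icc.1 hk)
    refine (natDegree_C_mul_le c H).trans_lt ?_
    simp [H]
  have hF_eval (x : ℝ) : F.eval x = G.eval x + c * H.eval x := by
    rw [hF, eval_add, eval_mul, eval_C]
  set x₀ := min (f (n + 1)) (g (n + 1)) - 1
  set L : ℕ → ℝ := fun k => if k ≤ n then h k else x₀
  have hL_sign : ∀ i, i + 1 ≤ n + 1 → 0 < (-1) ^ (i + 1) * F.eval (L (i + 1)) := by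
    intro i hi
    by_cases hin : i + 1 ≤ n
    · have hH : H.eval (h (i + 1)) = 0 := by
        rw [eval_prod_X_sub_C]
        exact Finset.prod_eq_zero (Finset.mem_Icc.2 ⟨Nat.le_add_left 1 i, hin⟩) (sub_self _)
      simpa only [L, hin, if_true, hF_eval, hH, mul_zero, add_zero]
        using hgh.neg_one_pow_mul_eval_prod_left_pos hin
    · obtain rfl : n = i := by omega
      simp only [L, hin, if_false, hF_prod, eval_prod_X_sub_C]
      exact neg_one_pow_mul_prod_sub_pos hf le_rfl
        (fun _ => by linarith [min_le_left (f (n + 1)) (g (n + 1))]) (absurd · (lt_irrefl _))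
  have hU_sign : ∀ i, i + 1 ≤ n + 1 → 0 < (-1) ^ i * F.eval (g (i + 1)) := by
    intro i hi
    have hG : G.eval (g (i + 1)) = 0 := by
      rw [eval_prod_X_sub_C]
      exact Finset.prod_eq_zero (Finset.mem_Icc.2 ⟨Nat.le_add_left 1 i, hi⟩) (sub_self _)
    rw [hF_eval, hG, zero_add, mul_left_comm]
    exact mul_pos hc (hgh.neg_one_pow_mul_eval_prod_right_pos (Nat.le_of_succ_le_succ hi))
  have hloc := mem_Ioo_of_eval_mul_neg (L := L) (U := g) hF_prod hf
    (fun k hk => by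
      by_cases hkn : k ≤ n
      · simpa [L, hkn] using (hgh k ⟨hk.1, hkn⟩).2
      · obtain rfl : k = n + 1 := by have := hk.2; omega
        simp only [L, hkn, if_false]
        linarith [min_le_right (f (n + 1)) (g (n + 1))])
    (fun k hk => by
      have hkn := Nat.le_of_lt_succ hk.2
      simpa [L, hkn] using (hgh k ⟨hk.1, hkn⟩).1.le)
    (fun k hk => by
      obtain ⟨i, rfl⟩ : ∃ i, k = i + 1 := Nat.exists_eq_add_one.2 hk.1
      exact mul_neg_of_neg_one_pow_mul_pos (hL_sign i hk.2) (hU_sign i hk.2))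
  refine ⟨hF_prod, fun k hk => ⟨(hloc k hk).2, fun hkn => ?_⟩⟩
  simpa [L, hkn] using (hloc k hk).1

end Interlaces

/-- The last conjunct is the chain `0 > p_{m1} > q_{m1} > r_{m1} > p_{m2} > ⋯ > r_{mm}`. -/
theorem tarasov_prod_and_chain {a b c : ℕ → ℝ} (ha : ∀ j, 0 < a j) (hb : ∀ j, 0 < b j)
    (hc : ∀ j, 0 < c j) {P Q R : ℕ → ℝ[X]} (hP0 : P 0 = 1) (hQ0 : Q 0 = 1) (hR0 : R 0 = 1)
    (hP : ∀ j, P (j + 1) = X * R j + C (a j) * P j)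
    (hQ : ∀ j, Q (j + 1) = P (j + 1) + C (b j) * Q j)
    (hR : ∀ j, R (j + 1) = Q (j + 1) + C (c j) * R j) {p q r : ℕ → ℕ → ℝ}
    (hp_root : ∀ j, ∀ k ∈ Set.Icc 1 j, (P j).IsRoot (p j k))
    (hq_root : ∀ j, ∀ k ∈ Set.Icc 1 j, (Q j).IsRoot (q j k))
    (hr_root : ∀ j, ∀ k ∈ Set.Icc 1 j, (R j).IsRoot (r j k))
    (hp : ∀ j, StrictAntiOn (p j) (Set.Icc 1 j)) (hq : ∀ j, StrictAntiOn (q j) (Set.Icc 1 j))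
    (hr : ∀ j, StrictAntiOn (r j) (Set.Icc 1 j)) (m : ℕ) :
    P m = ∏ k ∈ Finset.Icc 1 m, (X - C (p m k)) ∧ Q m = ∏ k ∈ Finset.Icc 1 m, (X - C (q m k)) ∧
      R m = ∏ k ∈ Finset.Icc 1 m, (X - C (r m k)) ∧
      ∀ k ∈ Set.Icc 1 m,
        r m k < q m k ∧ q m k < p m k ∧ p m k < if k = 1 then 0 else r m (k - 1) := by
  induction m with
  | zero => simp [hP0, hQ0, hR0]
  | succ m ih =>
    obtain ⟨hPm, hQm, hRm, hchain⟩ := ih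
    set g : ℕ → ℝ := fun k => if k = 1 then 0 else r m (k - 1)
    have hg (k : ℕ) (hk : k ∈ Set.Icc 1 m) : g (k + 1) = r m k := by
      simp [g, Nat.one_le_iff_ne_zero.1 hk.1]
    have hXR : X * R m = ∏ k ∈ Finset.Icc 1 (m + 1), (X - C (g k)) := by
      rw [Finset.prod_Icc_succ_bot (Nat.le_add_left 1 m), hRm]
      congr 1
      · simp [g]
      · exact Finset.prod_congr rfl fun k hk => by rw [hg k (Finset.mem_Icc.1 hk)]
    have hgp : Interlaces g (p m) m := fun k hk => by
      obtain ⟨hrq, hqp, hpg⟩ := hchain k hk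
      exact ⟨(hg k hk).symm ▸ hrq.trans hqp, hpg⟩
    obtain ⟨hP', hp'⟩ := hgp.add_C_mul (ha m) (by rw [hP, hXR, hPm]) (hp_root _) (hp _)
    have hp'_r (k : ℕ) (hk : k ∈ Set.Icc 1 m) : p (m + 1) (k + 1) < r m k :=
      hg k hk ▸ (hp' (k + 1) ⟨Nat.le_add_left 1 k, Nat.succ_le_succ hk.2⟩).1
    have hpq : Interlaces (p (m + 1)) (q m) m := fun k hk => by
      obtain ⟨hrq, hqp, -⟩ := hchain k hk
      exact ⟨(hp'_r k hk).trans hrq, hqp.trans ((hp' k ⟨hk.1, hk.2.trans m.le_succ⟩).2 hk.2)⟩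
    obtain ⟨hQ', hq'⟩ := hpq.add_C_mul (hb m) (by rw [hQ, hP', hQm]) (hq_root _) (hq _)
    have hqr : Interlaces (q (m + 1)) (r m) m := fun k hk => by
      obtain ⟨hrq, -, -⟩ := hchain k hk
      refine ⟨?_, hrq.trans ((hq' k ⟨hk.1, hk.2.trans m.le_succ⟩).2 hk.2)⟩
      exact (hq' (k + 1) ⟨Nat.le_add_left 1 k, Nat.succ_le_succ hk.2⟩).1.trans (hp'_r k hk)
    obtain ⟨hR', hr'⟩ := hqr.add_C_mul (hc m) (by rw [hR, hQ', hRm]) (hr_root _) (hr _)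
    refine ⟨hP', hQ', hR', fun k hk => ⟨(hr' k hk).1, (hq' k hk).1, ?_⟩⟩
    refine (hp' k hk).1.trans_le ?_
    obtain ⟨i, rfl⟩ : ∃ i, k = i + 1 := Nat.exists_eq_add_one.2 hk.1
    rcases Nat.eq_zero_or_pos i with rfl | hi
    · simp [g]
    · have hi' : i ∈ Set.Icc 1 m := ⟨hi, Nat.le_of_succ_le_succ hk.2⟩
      simpa [hg i hi', hi.ne'] using ((hr' i ⟨hi, hk.2.trans' i.le_succ⟩).2 hi'.2).le

theorem tarasov_roots_interlace_general (a b c : ℕ → ℝ)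
    (ha : ∀ j, 0 < a j) (hb : ∀ j, 0 < b j) (hc : ∀ j, 0 < c j)
    (P Q R : ℕ → Polynomial ℝ)
    (hP0 : P 0 = 1) (hQ0 : Q 0 = 1) (hR0 : R 0 = 1)
    (hP : ∀ j, P (j + 1) = X * R j + C (a j) * P j)
    (hQ : ∀ j, Q (j + 1) = P (j + 1) + C (b j) * Q j)
    (hR : ∀ j, R (j + 1) = Q (j + 1) + C (c j) * R j)
    (p q r : ℕ → ℕ → ℝ)
    (hproot : ∀ j, 1 ≤ j → ∀ k, 1 ≤ k → k ≤ j → (P j).IsRoot (p j k))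
    (hqroot : ∀ j, 1 ≤ j → ∀ k, 1 ≤ k → k ≤ j → (Q j).IsRoot (q j k))
    (hrroot : ∀ j, 1 ≤ j → ∀ k, 1 ≤ k → k ≤ j → (R j).IsRoot (r j k))
    (hpdec : ∀ j, 1 ≤ j → ∀ k l, 1 ≤ k → k < l → l ≤ j → p j l < p j k)
    (hqdec : ∀ j, 1 ≤ j → ∀ k l, 1 ≤ k → k < l → l ≤ j → q j l < q j k)
    (hrdec : ∀ j, 1 ≤ j → ∀ k l, 1 ≤ k → k < l → l ≤ j → r j l < r j k) :
    ∀ j, 1 ≤ j →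
      (∀ k, 1 ≤ k → k ≤ j → q j k < p j k ∧ r j k < q j k) ∧
      (∀ k, 1 ≤ k → k + 1 ≤ j → p j (k + 1) < r j k) := by
  have chain := tarasov_prod_and_chain ha hb hc hP0 hQ0 hR0 hP hQ hR
    (fun j k hk => hproot j (hk.1.trans hk.2) k hk.1 hk.2)
    (fun j k hk => hqroot j (hk.1.trans hk.2) k hk.1 hk.2)
    (fun j k hk => hrroot j (hk.1.trans hk.2) k hk.1 hk.2)
    (fun j k hk l hl hkl => hpdec j (hk.1.trans hk.2) k l hk.1 hkl hl.2)
    (fun j k hk l hl hkl => hqdec j (hk.1.trans hk.2) k l hk.1 hkl hl.2)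
    (fun j k hk l hl hkl => hrdec j (hk.1.trans hk.2) k l hk.1 hkl hl.2)
  intro j _
  obtain ⟨-, -, -, hchain⟩ := chain j
  refine ⟨fun k hk1 hk2 => ⟨(hchain k ⟨hk1, hk2⟩).2.1, (hchain k ⟨hk1, hk2⟩).1⟩,
    fun k hk1 hk2 => ?_⟩
  simpa [Nat.one_le_iff_ne_zero.1 hk1] using (hchain (k + 1) ⟨Nat.le_add_left 1 k, hk2⟩).2.2

/-- Interlacing of the roots of the polynomials of Tarasov's recurrence
(Proposition 9.1): if p j k, q j k, r j k (1 ≤ k ≤ j) enumerate the roots of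
P j, Q j, R j in strictly decreasing order, then p_{jk} > q_{jk} > r_{jk} for
all k = 1,…,j and r_{jk} > p_{j,k+1} for all k = 1,…,j−1. -/
theorem tarasov_roots_interlace (a b c : ℕ → ℝ)
    (ha : ∀ j, 0 < a j) (hb : ∀ j, 0 < b j) (hc : ∀ j, 0 < c j)
    (P Q R : ℕ → Polynomial ℝ)
    (hP0 : P 0 = 1) (hQ0 : Q 0 = 1) (hR0 : R 0 = 1)
    (hP : ∀ j, P (j + 1) = X * R j + C (a j) * P j)
    (hQ : ∀ j, Q (j + 1) = P (j + 1) + C (b j) * Q j)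
    (hR : ∀ j, R (j + 1) = Q (j + 1) + C (c j) * R j)
    (p q r : ℕ → ℕ → ℝ)
    (hproot : ∀ j, 1 ≤ j → ∀ k, 1 ≤ k → k ≤ j → (P j).IsRoot (p j k))
    (hqroot : ∀ j, 1 ≤ j → ∀ k, 1 ≤ k → k ≤ j → (Q j).IsRoot (q j k))
    (hrroot : ∀ j, 1 ≤ j → ∀ k, 1 ≤ k → k ≤ j → (R j).IsRoot (r j k))
    (hpdec : ∀ j, 1 ≤ j → ∀ k l, 1 ≤ k → k < l → l ≤ j → p j l < p j k)
    (hqdec : ∀ j, 1 ≤ j → ∀ k l, 1 ≤ k → k < l → l ≤ j → q j l < q j k)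
    (hrdec : ∀ j, 1 ≤ j → ∀ k l, 1 ≤ k → k < l → l ≤ j → r j l < r j k)
    (hpall : ∀ j, 1 ≤ j → ∀ x : ℝ, (P j).IsRoot x → ∃ k, 1 ≤ k ∧ k ≤ j ∧ x = p j k)
    (hqall : ∀ j, 1 ≤ j → ∀ x : ℝ, (Q j).IsRoot x → ∃ k, 1 ≤ k ∧ k ≤ j ∧ x = q j k)
    (hrall : ∀ j, 1 ≤ j → ∀ x : ℝ, (R j).IsRoot x → ∃ k, 1 ≤ k ∧ k ≤ j ∧ x = r j k) :
    ∀ j, 1 ≤ j →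
      (∀ k, 1 ≤ k → k ≤ j → q j k < p j k ∧ r j k < q j k) ∧
      (∀ k, 1 ≤ k → k + 1 ≤ j → p j (k + 1) < r j k) :=
  tarasov_roots_interlace_general a b c ha hb hc P Q R hP0 hQ0 hR0 hP hQ hR p q r hproot hqroot
    hrroot hpdec hqdec hrdec
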